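/- arXiv:2412.11957 — 5 statements merged into one kernel-verified Lean document; each statement's English description precedes it below -/
import Mathlib

section
/- The local multiplexity dominance relation ≺ on multigraphs is acyclic: there is no finite sequence of multigraphs g_1 ≺ g_2 ≺ ... ≺ g_n ≺ g_1. -/
/-- Local multiplexity dominance: `gh ≺ g` iff `gh` is obtained from `g` by moving a
layer-`ℓ` link of node `i` from neighbor `j` to neighbor `k`, where the layers linking
`i` and `k` form a strict subset of those linking `i` and `j` (minus `ℓ`). -/
def Prec {n L : ℕ} (gh g : Fin n → Fin n → Finset (Fin L)) : Prop :=
  ∃ (i j k : Fin n) (ℓ : Fin L),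
    i ≠ j ∧ i ≠ k ∧ j ≠ k ∧
    ℓ ∈ g i j ∧ ℓ ∉ g i k ∧
    g i k ⊂ (g i j).erase ℓ ∧
    gh i j = (g i j).erase ℓ ∧ gh j i = (g i j).erase ℓ ∧
    gh i k = insert ℓ (g i k) ∧ gh k i = insert ℓ (g i k) ∧
    (∀ a b : Fin n, ({a, b} : Finset (Fin n)) ≠ {i, j} →
      ({a, b} : Finset (Fin n)) ≠ {i, k} → gh a b = g a b)

/-- Potential function: sum of squared multiplexities. -/
def Spot {n L : ℕ} (g : Fin n → Fin n → Finset (Fin L)) : ℕ :=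
  ∑ p : Fin n × Fin n, (g p.1 p.2 ∪ g p.2 p.1).card ^ 2

lemma finset_pair_eq {α : Type*} [DecidableEq α] {a b i j : α} (hij : i ≠ j)
    (h : ({a, b} : Finset α) = {i, j}) : (a = i ∧ b = j) ∨ (a = j ∧ b = i) := by
  have ha : a ∈ ({i, j} : Finset α) := h ▸ Finset.mem_insert_self a {b}
  have hb : b ∈ ({i, j} : Finset α) := h ▸ (by simp)
  have hi : i ∈ ({a, b} : Finset α) := h ▸ (by simp)
  have hj : j ∈ ({a, b} : Finset α) := h ▸ (by simp)
  simp only [Finset.mem_insert, Finset.mem_singleton] at ha hb hi hj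
  rcases ha with rfl | rfl <;> rcases hb with rfl | rfl <;> tauto

lemma Spot_lt {n L : ℕ} {gh g : Fin n → Fin n → Finset (Fin L)} (h : Prec gh g) :
    Spot gh < Spot g := by
  obtain ⟨i, j, k, ℓ, hij, hik, hjk, hmem, hnmem, hss, h1, h2, h3, h4, houter⟩ := h
  set T : Finset (Fin n × Fin n) := {(i, j), (j, i), (i, k), (k, i)} with hT
  have hTsub : T ⊆ Finset.univ := Finset.subset_univ T
  have key : ∀ gg : Fin n → Fin n → Finset (Fin L),
      Spot gg = ∑ p ∈ Finset.univ \ T, (gg p.1 p.2 ∪ gg p.2 p.1).card ^ 2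
               + ∑ p ∈ T, (gg p.1 p.2 ∪ gg p.2 p.1).card ^ 2 := by
    intro gg
    rw [Spot, ← Finset.sum_sdiff hTsub]
  rw [key gh, key g]
  have houtereq : ∀ p ∈ Finset.univ \ T,
      (gh p.1 p.2 ∪ gh p.2 p.1).card ^ 2 = (g p.1 p.2 ∪ g p.2 p.1).card ^ 2 := by
    rintro ⟨a, b⟩ hp
    simp only [Finset.mem_sdiff, hT, Finset.mem_insert, Finset.mem_singleton,
      Prod.mk.injEq] at hp
    have hab : gh a b = g a b := by
      apply houter
      · intro hcon
        rcases finset_pair_eq hij hcon with ⟨rfl, rfl⟩ | ⟨rfl, rfl⟩ <;> tauto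
      · intro hcon
        rcases finset_pair_eq hik hcon with ⟨rfl, rfl⟩ | ⟨rfl, rfl⟩ <;> tauto
    have hba : gh b a = g b a := by
      apply houter
      · intro hcon
        rcases finset_pair_eq hij hcon with ⟨rfl, rfl⟩ | ⟨rfl, rfl⟩ <;> tauto
      · intro hcon
        rcases finset_pair_eq hik hcon with ⟨rfl, rfl⟩ | ⟨rfl, rfl⟩ <;> tauto
    simp only [hab, hba]
  rw [Finset.sum_congr rfl houtereq]
  have hTsum : ∀ gg : Fin n → Fin n → Finset (Fin L),
      ∑ p ∈ T, (gg p.1 p.2 ∪ gg p.2 p.1).card ^ 2 =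
        (gg i j ∪ gg j i).card ^ 2 + (gg j i ∪ gg i j).card ^ 2
        + (gg i k ∪ gg k i).card ^ 2 + (gg k i ∪ gg i k).card ^ 2 := by
    intro gg
    rw [hT]
    rw [Finset.sum_insert (by simp [Prod.ext_iff, hij, hik, hjk, hij.symm, hik.symm, hjk.symm]),
        Finset.sum_insert (by simp [Prod.ext_iff, hij, hik, hjk, hij.symm, hik.symm, hjk.symm]),
        Finset.sum_insert (by simp [Prod.ext_iff, hij, hik, hjk, hij.symm, hik.symm, hjk.symm]),
        Finset.sum_singleton]
    ring
  rw [hTsum gh, hTsum g, h1, h2, h3, h4]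
  rw [Finset.union_self, Finset.union_self]
  have hcard1 : ((g i j).erase ℓ).card = (g i j).card - 1 := Finset.card_erase_of_mem hmem
  have hcard2 : (insert ℓ (g i k)).card = (g i k).card + 1 := Finset.card_insert_of_notMem hnmem
  have hpos : 1 ≤ (g i j).card := Finset.card_pos.mpr ⟨ℓ, hmem⟩
  have hlt : (g i k).card < ((g i j).erase ℓ).card := Finset.card_lt_card hss
  rw [hcard1] at hlt
  rw [hcard1, hcard2]
  have hx : (g i j).card ≤ (g i j ∪ g j i).card :=
    Finset.card_le_card Finset.subset_union_left
  have hy : (g i k).card ≤ (g i k ∪ g k i).card :=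
    Finset.card_le_card Finset.subset_union_left
  have hxy : (g j i ∪ g i j) = (g i j ∪ g j i) := Finset.union_comm _ _
  have hxy2 : (g k i ∪ g i k) = (g i k ∪ g k i) := Finset.union_comm _ _
  rw [hxy, hxy2]
  apply Nat.add_lt_add_left
  set a := (g i j).card
  set b := (g i k).card
  set x := (g i j ∪ g j i).card
  set y := (g i k ∪ g k i).card
  have hb : b + 1 ≤ a - 1 := hlt
  have ha : a = (a - 1) + 1 := (Nat.succ_pred_eq_of_pos hpos).symm
  nlinarith [ha, hb, hx, hy]

/-- The local multiplexity dominance relation is acyclic: no finite cycle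
`g_0 ≺ g_1 ≺ ⋯ ≺ g_m = g_0` exists. -/
theorem stmt_1 {n L : ℕ} (m : ℕ) (hm : 1 ≤ m)
    (gs : ℕ → (Fin n → Fin n → Finset (Fin L)))
    (hchain : ∀ t < m, Prec (gs t) (gs (t + 1))) :
    gs m ≠ gs 0 := by
  have hmono : ∀ t ≤ m, Spot (gs 0) ≤ Spot (gs t) ∧ (1 ≤ t → Spot (gs 0) < Spot (gs t)) := by
    intro t ht
    induction t with
    | zero => exact ⟨le_rfl, by omega⟩
    | succ s ih =>
      have hs : s ≤ m := by omega
      obtain ⟨h1, _⟩ := ih hs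
      have := Spot_lt (hchain s (by omega))
      exact ⟨by omega, fun _ => by omega⟩
  intro hcon
  have := (hmono m le_rfl).2 hm
  rw [hcon] at this
  omega
end

section
/- Let ρ ∈ (0,1), q_A, q_B ∈ (0,1), f ∈ [0, min(q_A,q_B)], and a positive integer a. Let c, d ≥ 0 with d ≥ a, and define P₁ = 1 − (1−ρq_A)^c (1−ρq_B)^c (1−ρ(q_A+q_B−f))^d and P₂ = 1 − (1−ρq_A)^{c+a} (1−ρq_B)^{c+a} (1−ρ(q_A+q_B−f))^{d−a}, assuming 1 − ρ(q_A+q_B−f) > 0. Then P₂ > P₁ if and only if ρ q_A q_B < f. -/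
theorem stmt_3 (ρ qA qB f : ℝ) (a c d : ℕ)
    (hρ : ρ ∈ Set.Ioo (0:ℝ) 1)
    (hqA : qA ∈ Set.Ioo (0:ℝ) 1) (hqB : qB ∈ Set.Ioo (0:ℝ) 1)
    (hf : f ∈ Set.Icc (0:ℝ) (min qA qB))
    (ha : 0 < a) (hda : a ≤ d)
    (hbase : 0 < 1 - ρ * (qA + qB - f))
    (P₁ P₂ : ℝ)
    (hP₁ : P₁ = 1 - (1 - ρ * qA) ^ c * (1 - ρ * qB) ^ c *
        (1 - ρ * (qA + qB - f)) ^ d)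
    (hP₂ : P₂ = 1 - (1 - ρ * qA) ^ (c + a) * (1 - ρ * qB) ^ (c + a) *
        (1 - ρ * (qA + qB - f)) ^ (d - a)) :
    P₂ > P₁ ↔ ρ * qA * qB < f := by
  obtain ⟨hρ0, hρ1⟩ := hρ
  obtain ⟨hqA0, hqA1⟩ := hqA
  obtain ⟨hqB0, hqB1⟩ := hqB
  have hA : 0 < 1 - ρ * qA := by nlinarith
  have hB : 0 < 1 - ρ * qB := by nlinarith
  set Y := 1 - ρ * (qA + qB - f) with hYdef
  subst hP₁ hP₂
  have eY : Y ^ d = Y ^ (d - a) * Y ^ a := by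
    rw [← pow_add, Nat.sub_add_cancel hda]
  have e1 : (1 - ρ*qA)^(c+a) * (1 - ρ*qB)^(c+a) * Y^(d-a)
      = ((1 - ρ*qA)^c * (1 - ρ*qB)^c * Y^(d-a)) * ((1 - ρ*qA)*(1 - ρ*qB))^a := by
    rw [pow_add, pow_add, mul_pow]; ring
  have e2 : (1 - ρ*qA)^c * (1 - ρ*qB)^c * Y^d
      = ((1 - ρ*qA)^c * (1 - ρ*qB)^c * Y^(d-a)) * Y^a := by
    rw [eY]; ring
  rw [gt_iff_lt, sub_lt_sub_iff_left, e1, e2,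
    mul_lt_mul_iff_right₀ (by positivity),
    pow_lt_pow_iff_left₀ (by positivity) hbase.le ha.ne']
  simp only [hYdef]
  constructor <;> intro h <;> nlinarith
end

section
/- Let τ ≥ 2, and let N be a nonnegative-integer-valued random variable (the number of transmissions from other neighbors), independent of the Bernoulli variables J, K, X_A, X_B above. The probability that i is infected (total transmissions ≥ τ) in the multiplexed minus the unmultiplexed configuration equals ρ(1−ρ) q_A q_B · (P(N = τ−2) − P(N = τ−1)). In particular, the multiplexed configuration yields strictly higher infection probability iff P(N = τ−2) > P(N = τ−1) (given ρ ∈ (0,1) and q_A q_B > 0), and strictly lower iff the reverse strict inequality holds. -/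
/-- Bernoulli weight: probability `p` on `true`, `1 - p` on `false`. -/
noncomputable def bern (p : ℝ) (b : Bool) : ℝ := if b then p else 1 - p

/-- Joint weight of an outcome `(J, K, X_A, X_B)`: `J, K ~ Bernoulli ρ`,
`X_A ~ Bernoulli q_A`, `X_B ~ Bernoulli q_B`, all independent. -/
noncomputable def jointW (ρ qA qB : ℝ) (ω : Bool × Bool × Bool × Bool) : ℝ :=
  bern ρ ω.1 * bern ρ ω.2.1 * bern qA ω.2.2.1 * bern qB ω.2.2.2

/-- Number of transmissions in the multiplexed configuration: `J * (X_A + X_B)`. -/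
def mpxCount (ω : Bool × Bool × Bool × Bool) : ℕ :=
  if ω.1 then (if ω.2.2.1 then 1 else 0) + (if ω.2.2.2 then 1 else 0) else 0

/-- Number of transmissions in the unmultiplexed configuration: `J * X_A + K * X_B`. -/
def sepCount (ω : Bool × Bool × Bool × Bool) : ℕ :=
  (if ω.1 && ω.2.2.1 then 1 else 0) + (if ω.2.1 && ω.2.2.2 then 1 else 0)

/-- Probability that the number of transmissions is at least `t`. -/
noncomputable def probGe (ρ qA qB : ℝ) (count : Bool × Bool × Bool × Bool → ℕ) (t : ℕ) : ℝ :=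
  ∑ ω : Bool × Bool × Bool × Bool, jointW ρ qA qB ω * (if t ≤ count ω then 1 else 0)

/-- Infection probability under complex contagion with threshold τ: the node receives
N other transmissions (pmf pN) plus the transmissions from the changed links (count). -/
noncomputable def infProb (ρ qA qB : ℝ) (pN : ℕ → ℝ) (τ : ℕ)
    (count : Bool × Bool × Bool × Bool → ℕ) : ℝ :=
  ∑' n : ℕ, pN n * ∑ ω : Bool × Bool × Bool × Bool,
    jointW ρ qA qB ω * (if τ ≤ n + count ω then 1 else 0)

lemma key (ρ qA qB : ℝ) (τ n : ℕ) :
    (∑ ω : Bool × Bool × Bool × Bool, jointW ρ qA qB ω *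
        ((if τ ≤ n + mpxCount ω then (1:ℝ) else 0) -
         (if τ ≤ n + sepCount ω then (1:ℝ) else 0)))
      = if n + 2 = τ then ρ*(1-ρ)*qA*qB else if n + 1 = τ then -(ρ*(1-ρ)*qA*qB) else 0 := by
  rcases le_or_gt τ n with h | h
  · have h0 : τ ≤ n + 0 := by omega
    have h1 : τ ≤ n + 1 := by omega
    have h2 : τ ≤ n + (1+1) := by omega
    have e2 : ¬ (n + 2 = τ) := by omega
    have e1 : ¬ (n + 1 = τ) := by omega
    simp [Fintype.sum_prod_type, jointW, bern, mpxCount, sepCount, h0, h1, h2, h, e1, e2]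
  · rcases le_or_gt τ (n+1) with h1 | h1'
    · have h0 : ¬ τ ≤ n + 0 := by omega
      have h0' : ¬ τ ≤ n := by omega
      have h2 : τ ≤ n + (1+1) := by omega
      have e2 : ¬ (n + 2 = τ) := by omega
      have e1 : n + 1 = τ := by omega
      simp [Fintype.sum_prod_type, jointW, bern, mpxCount, sepCount, h0, h0', h1, h2, e1, e2]
      ring
    · rcases le_or_gt τ (n+2) with h2 | h2'
      · have h0 : ¬ τ ≤ n + 0 := by omega
        have h0' : ¬ τ ≤ n := by omega
        have h1 : ¬ τ ≤ n + 1 := by omega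
        have h2 : τ ≤ n + (1+1) := by omega
        have e2 : n + 2 = τ := by omega
        simp [Fintype.sum_prod_type, jointW, bern, mpxCount, sepCount, h0, h0', h1, h2, e2]
      · have h0 : ¬ τ ≤ n + 0 := by omega
        have h0' : ¬ τ ≤ n := by omega
        have h1 : ¬ τ ≤ n + 1 := by omega
        have h2 : ¬ τ ≤ n + (1+1) := by omega
        have e2 : ¬ n + 2 = τ := by omega
        have e1 : ¬ n + 1 = τ := by omega
        simp [Fintype.sum_prod_type, jointW, bern, mpxCount, sepCount, h0, h0', h1, h2, e1, e2]

lemma jointW_nonneg (ρ qA qB : ℝ) (hρ : ρ ∈ Set.Ioo (0:ℝ) 1)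
    (hqA : qA ∈ Set.Icc (0:ℝ) 1) (hqB : qB ∈ Set.Icc (0:ℝ) 1)
    (ω : Bool × Bool × Bool × Bool) : 0 ≤ jointW ρ qA qB ω := by
  obtain ⟨h1, h2⟩ := hρ; obtain ⟨h3, h4⟩ := hqA; obtain ⟨h5, h6⟩ := hqB
  unfold jointW bern
  have : ∀ (p : ℝ), 0 ≤ p → p ≤ 1 → ∀ b : Bool, 0 ≤ (if b then p else 1 - p) := by
    intro p hp hp1 b; cases b <;> simp <;> linarith
  exact mul_nonneg (mul_nonneg (mul_nonneg (this ρ h1.le h2.le _) (this ρ h1.le h2.le _))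
    (this qA h3 h4 _)) (this qB h5 h6 _)

theorem stmt_8 (ρ qA qB : ℝ)
    (hρ : ρ ∈ Set.Ioo (0:ℝ) 1) (hqA : qA ∈ Set.Icc (0:ℝ) 1) (hqB : qB ∈ Set.Icc (0:ℝ) 1)
    (τ : ℕ) (hτ : 2 ≤ τ)
    (pN : ℕ → ℝ) (hpN : ∀ n, 0 ≤ pN n) (hpNsum : ∑' n : ℕ, pN n = 1) :
    infProb ρ qA qB pN τ mpxCount - infProb ρ qA qB pN τ sepCount
        = ρ * (1 - ρ) * qA * qB * (pN (τ - 2) - pN (τ - 1)) ∧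
    (0 < qA * qB →
      ((infProb ρ qA qB pN τ sepCount < infProb ρ qA qB pN τ mpxCount ↔
          pN (τ - 1) < pN (τ - 2)) ∧
        (infProb ρ qA qB pN τ mpxCount < infProb ρ qA qB pN τ sepCount ↔
          pN (τ - 2) < pN (τ - 1)))) := by
  have hJ := jointW_nonneg ρ qA qB hρ hqA hqB
  have hsumpN : Summable pN := by
    by_contra h
    rw [tsum_eq_zero_of_not_summable h] at hpNsum
    norm_num at hpNsum
  set c : ℝ := ρ * (1 - ρ) * qA * qB with hc
  -- summability of the two series
  have hbound : ∀ (count : Bool × Bool × Bool × Bool → ℕ),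
      Summable (fun n => pN n * ∑ ω : Bool × Bool × Bool × Bool,
        jointW ρ qA qB ω * (if τ ≤ n + count ω then (1:ℝ) else 0)) := by
    intro count
    apply Summable.of_nonneg_of_le
    · intro n
      refine mul_nonneg (hpN n) (Finset.sum_nonneg fun ω _ => ?_)
      exact mul_nonneg (hJ ω) (by positivity)
    · intro n
      show _ ≤ pN n * (∑ ω : Bool × Bool × Bool × Bool, jointW ρ qA qB ω)
      refine mul_le_mul_of_nonneg_left (Finset.sum_le_sum fun ω _ => ?_) (hpN n)
      rcases le_or_gt τ (n + count ω) with h | h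
      · simp [h]
      · simp [Nat.not_le.mpr h, hJ ω]
    · exact hsumpN.mul_right _
  have hdiff : infProb ρ qA qB pN τ mpxCount - infProb ρ qA qB pN τ sepCount
      = ∑' n : ℕ, pN n * (if n + 2 = τ then c else if n + 1 = τ then -c else 0) := by
    unfold infProb
    rw [← Summable.tsum_sub (hbound mpxCount) (hbound sepCount)]
    congr 1
    funext n
    rw [← mul_sub, ← Finset.sum_sub_distrib]
    congr 1
    rw [← key ρ qA qB τ n]
    congr 1
    funext ω
    ring
  have hfin : (∑' n : ℕ, pN n * (if n + 2 = τ then c else if n + 1 = τ then -c else 0))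
      = c * (pN (τ - 2) - pN (τ - 1)) := by
    rw [tsum_eq_sum (s := ({τ - 2, τ - 1} : Finset ℕ))]
    · have hne : τ - 2 ≠ τ - 1 := by omega
      rw [Finset.sum_pair hne]
      have e1 : τ - 2 + 2 = τ := by omega
      have e2 : ¬ (τ - 1 + 2 = τ) := by omega
      have e3 : τ - 1 + 1 = τ := by omega
      simp only [e1, e2, e3, if_pos rfl, if_true, if_false]
      ring
    · intro n hn
      simp only [Finset.mem_insert, Finset.mem_singleton] at hn
      push_neg at hn
      have e2 : ¬ (n + 2 = τ) := by omega
      have e1 : ¬ (n + 1 = τ) := by omega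
      simp [e1, e2]
  have hmain : infProb ρ qA qB pN τ mpxCount - infProb ρ qA qB pN τ sepCount
      = c * (pN (τ - 2) - pN (τ - 1)) := hdiff.trans hfin
  refine ⟨by rw [hmain], fun hq => ?_⟩
  have hcpos : 0 < c := by
    obtain ⟨h1, h2⟩ := hρ
    have : 0 < ρ * (1 - ρ) := mul_pos h1 (by linarith)
    calc (0:ℝ) < ρ * (1 - ρ) * (qA * qB) := mul_pos this hq
      _ = c := by rw [hc]; ring
  constructor
  · rw [← sub_pos, hmain]
    exact ⟨fun h => by nlinarith, fun h => mul_pos hcpos (by linarith)⟩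
  · rw [← sub_neg, hmain]
    exact ⟨fun h => by nlinarith, fun h => by nlinarith [mul_pos hcpos (show (0:ℝ) < pN (τ-1) - pN (τ-2) by linarith)]⟩
end

section
/- Combining the two previous results: for a complex contagion with threshold τ ≥ 2, a node with m ≥ τ−1 other connections each transmitting independently with probability ρq (neighbors infected with probability ρ, per-layer transmission probability q ∈ (0,1)), and a changed pair of links as above (multiplexed double link to j versus single links to j and k), there exist 0 < ρ_ < ρ̄ < 1 such that: if ρq > ρ̄ the node is strictly less likely to be infected under the multiplexed configuration, and if 0 < ρq < ρ_ it is strictly more likely to be infected under the multiplexed configuration (assuming q_A q_B > 0 and ρ ∈ (0,1)). -/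
/-- Binomial pmf: probability of exactly `k` successes among `m` independent trials
with success probability `p`. -/
noncomputable def binomPMF (m : ℕ) (p : ℝ) (k : ℕ) : ℝ :=
  (m.choose k : ℝ) * p ^ k * (1 - p) ^ (m - k)

/-- Difference (multiplexed minus unmultiplexed) in infection probability under
complex contagion with threshold τ, when other transmissions are Binomial(m, ρq). -/
noncomputable def mpxDiff (m τ : ℕ) (ρ q qA qB : ℝ) : ℝ :=
  ρ * (1 - ρ) * qA * qB * (binomPMF m (ρ * q) (τ - 2) - binomPMF m (ρ * q) (τ - 1))

theorem stmt_10 (m τ : ℕ) (hτ : 2 ≤ τ) (hm : τ - 1 ≤ m)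
    (qA qB : ℝ) (hqAB : 0 < qA * qB) :
    ∃ ρlo ρbar : ℝ, 0 < ρlo ∧ ρlo < ρbar ∧ ρbar < 1 ∧
      ∀ ρ q : ℝ, ρ ∈ Set.Ioo (0:ℝ) 1 → q ∈ Set.Ioo (0:ℝ) 1 →
        (ρbar < ρ * q → mpxDiff m τ ρ q qA qB < 0) ∧
        (ρ * q < ρlo → 0 < mpxDiff m τ ρ q qA qB) := by
  obtain ⟨a, rfl⟩ : ∃ a, τ = a + 2 := ⟨τ - 2, by omega⟩
  have ha : a + 1 ≤ m := by omega
  set Ca : ℝ := (m.choose a : ℝ) with hCa_def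
  set Cb : ℝ := (m.choose (a+1) : ℝ) with hCb_def
  have hCa : 0 < Ca := by
    rw [hCa_def]; exact_mod_cast Nat.choose_pos (show a ≤ m by omega)
  have hCb : 0 < Cb := by
    rw [hCb_def]; exact_mod_cast Nat.choose_pos ha
  have hsum : 0 < Ca + Cb := by linarith
  refine ⟨Ca / (Ca + Cb) / 2, Ca / (Ca + Cb), by positivity, ?_, ?_, ?_⟩
  · have : 0 < Ca / (Ca + Cb) := by positivity
    linarith
  · rw [div_lt_one hsum]; linarith
  · intro ρ q hρ hq
    obtain ⟨hρ0, hρ1⟩ := hρ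
    obtain ⟨hq0, hq1⟩ := hq
    set p : ℝ := ρ * q with hp_def
    have hp0 : 0 < p := mul_pos hρ0 hq0
    have hp1 : p < 1 := by nlinarith
    have hkey : binomPMF m p ((a+2) - 2) - binomPMF m p ((a+2) - 1)
        = p ^ a * (1 - p) ^ (m - (a+1)) * (Ca * (1 - p) - Cb * p) := by
      have h2 : (a+2) - 2 = a := by omega
      have h1 : (a+2) - 1 = a + 1 := by omega
      have hma : m - a = (m - (a+1)) + 1 := by omega
      rw [h2, h1]
      unfold binomPMF
      rw [hma, pow_succ, pow_succ]
      ring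
    have hpow : 0 < p ^ a * (1 - p) ^ (m - (a+1)) := by
      apply mul_pos (pow_pos hp0 _) (pow_pos (by linarith) _)
    have hcoef : 0 < ρ * (1 - ρ) * qA * qB := by
      rw [mul_assoc]; exact mul_pos (mul_pos hρ0 (by linarith)) hqAB
    constructor
    · intro hgt
      have hlin : Ca * (1 - p) - Cb * p < 0 := by
        rw [div_lt_iff₀ hsum] at hgt
        nlinarith
      have : mpxDiff m (a+2) ρ q qA qB
          = ρ * (1 - ρ) * qA * qB * (p ^ a * (1 - p) ^ (m - (a+1)) * (Ca * (1 - p) - Cb * p)) := by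
        rw [mpxDiff, ← hp_def, hkey]
      rw [this]
      exact mul_neg_of_pos_of_neg hcoef (mul_neg_of_pos_of_neg hpow hlin)
    · intro hlt
      have hlin : 0 < Ca * (1 - p) - Cb * p := by
        have h2 : p * 2 < Ca / (Ca + Cb) := by linarith
        have h3 : p * 2 * (Ca + Cb) < Ca := (lt_div_iff₀ hsum).mp h2
        nlinarith
      have : mpxDiff m (a+2) ρ q qA qB
          = ρ * (1 - ρ) * qA * qB * (p ^ a * (1 - p) ^ (m - (a+1)) * (Ca * (1 - p) - Cb * p)) := by
        rw [mpxDiff, ← hp_def, hkey]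
      rw [this]
      exact mul_pos hcoef (mul_pos hpow hlin)
end

section
/- Let q_A, q_B ∈ (0,1), f = q_A q_B (independent transmission), ρ ∈ (0,1). For the two-layer SIS model, define φ^mpx(ρ) using one doubly-linked neighbor and φ^sep(ρ) using one layer-A neighbor and one layer-B neighbor (all other connections equal): φ^sep(ρ) − φ^mpx(ρ) = B(ρ)·[(1−ρq_A)(1−ρq_B) − (1−ρ(q_A+q_B−q_Aq_B))] = B(ρ)·ρq_Aq_B(1−ρ) > 0, where B(ρ) > 0 is the common factor from the other connections. Hence under independent transmission, splitting any multiplexed link strictly increases the per-period infection probability whenever ρ ∈ (0,1). -/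
theorem stmt_16 (ρ qA qB B : ℝ)
    (hρ : ρ ∈ Set.Ioo (0:ℝ) 1)
    (hqA : qA ∈ Set.Ioo (0:ℝ) 1) (hqB : qB ∈ Set.Ioo (0:ℝ) 1)
    (hB : 0 < B)
    (φmpx φsep : ℝ)
    (hφmpx : φmpx = 1 - B * (1 - ρ * (qA + qB - qA * qB)))
    (hφsep : φsep = 1 - B * ((1 - ρ * qA) * (1 - ρ * qB))) :
    (1 - ρ * (qA + qB - qA * qB)) - (1 - ρ * qA) * (1 - ρ * qB)
        = ρ * qA * qB * (1 - ρ) ∧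
    φsep - φmpx = B * ((1 - ρ * (qA + qB - qA * qB)) - (1 - ρ * qA) * (1 - ρ * qB)) ∧
    φsep - φmpx = B * (ρ * qA * qB * (1 - ρ)) ∧
    0 < φsep - φmpx := by
  obtain ⟨hρ0, hρ1⟩ := hρ
  obtain ⟨hA0, hA1⟩ := hqA
  obtain ⟨hB0, hB1⟩ := hqB
  refine ⟨by ring, by rw [hφmpx, hφsep]; ring, by rw [hφmpx, hφsep]; ring, ?_⟩
  have : φsep - φmpx = B * (ρ * qA * qB * (1 - ρ)) := by rw [hφmpx, hφsep]; ring
  rw [this]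
  have h1 : 0 < 1 - ρ := by linarith
  positivity
end
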